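/- arXiv:1307.3113 — 2 statements merged into one kernel-verified Lean document; each statement's English description precedes it below -/
import Mathlib

section
/- In a connected Nash equilibrium graph of the network creation game on n vertices with parameter α > 1, for every vertex v, if N_1 and N_2 denote the sets of vertices at distance exactly 1 and 2 from v, then |N_1| + α·|N_2| + 1 ≥ n. -/
open scoped ENNReal

section NetworkCreation

variable {V : Type*} [Fintype V] [DecidableEq V]

/-- The undirected network formed by a strategy profile `S`:
`v` and `w` are adjacent iff one of them bought the edge to the other. -/
def netGraph (S : V → Finset V) : SimpleGraph V where
  Adj v w := v ≠ w ∧ (w ∈ S v ∨ v ∈ S w)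
  symm := ⟨fun _ _ h => ⟨h.1.symm, h.2.symm⟩⟩
  loopless := ⟨fun _ h => h.1 rfl⟩

instance (S : V → Finset V) : DecidableRel (netGraph S).Adj :=
  fun v w => inferInstanceAs (Decidable (v ≠ w ∧ (w ∈ S v ∨ v ∈ S w)))

/-- Individual cost of agent `v`: `α` per bought edge, plus the sum of the
graph distances from `v` to all vertices (`⊤` if some vertex is unreachable). -/
noncomputable def netCost (α : ℝ) (S : V → Finset V) (v : V) : ℝ≥0∞ :=
  ENNReal.ofReal α * (S v).card + ∑ w, ((netGraph S).edist v w : ℝ≥0∞)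

/-- (Weak) Nash equilibrium: no agent can strictly decrease its own cost by
unilaterally switching its bought-edge set to any other set of other vertices. -/
def IsNash (α : ℝ) (S : V → Finset V) : Prop :=
  ∀ (v : V) (T : Finset V), v ∉ T →
    netCost α S v ≤ netCost α (Function.update S v T) v

/-- Total social cost of a strategy profile. -/
noncomputable def socialCost (α : ℝ) (S : V → Finset V) : ℝ≥0∞ :=
  ∑ v, netCost α S v

end NetworkCreation


/-!
Let `u` be at distance 2 from `v`. If `v` buys the edge `vu` at price `α`, every vertex `w`
whose shortest paths from `v` may pass through `u` (that is, `d(u,w) + 2 = d(v,w)`, including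
`u` itself) gets at least one step closer, so at equilibrium there are at most `α` of them.
Every vertex at distance `≥ 2` from `v` is of this kind for some such `u`, hence there are at
most `α |N₂|` of them; with `v` and `N₁` these exhaust all `n` vertices.
-/

open Finset

namespace SimpleGraph

variable {V : Type*} {G : SimpleGraph V}

lemma Reachable.exists_dist_eq_add {v w : V} (h : G.Reachable v w) {k : ℕ}
    (hk : k ≤ G.dist v w) : ∃ u, G.dist v u = k ∧ k + G.dist u w = G.dist v w := by
  obtain ⟨p, hp⟩ := h.exists_walk_length_eq_dist
  refine ⟨p.getVert k, ?_, ?_⟩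
  · rw [← length_eq_dist_of_subwalk hp (p.isSubwalk_take k), Walk.take_length]
    omega
  · rw [← length_eq_dist_of_subwalk hp (p.isSubwalk_drop k), Walk.drop_length]
    omega

variable [Fintype V]

lemma Connected.ncard_edist_eq (h : G.Connected) (v : V) (k : ℕ) :
    {w | G.edist v w = k}.ncard = #{w | G.dist v w = k} := by
  rw [← Set.ncard_coe_finset]
  congr 1
  ext w
  simp [← (h v w).coe_dist_eq_edist]

variable [DecidableEq V]

lemma Connected.card_le_card_dist_eq_one_add_card_two_le_dist (h : G.Connected) (v : V) :
    Fintype.card V ≤ #{w | G.dist v w = 1} + #{w | 2 ≤ G.dist v w} + 1 := by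
  have hcover : (univ : Finset V) ⊆
      insert v (({w | G.dist v w = 1} : Finset V) ∪ ({w | 2 ≤ G.dist v w} : Finset V)) := by
    intro w _
    rcases eq_or_ne v w with rfl | hne
    · exact mem_insert_self _ _
    · have := h.pos_dist_of_ne hne
      simp only [mem_insert, mem_union, mem_filter, mem_univ, true_and]
      omega
  rw [← card_univ]
  exact (card_le_card hcover).trans
    ((card_insert_le _ _).trans (Nat.add_le_add_right (card_union_le _ _) 1))

end SimpleGraph

section NetworkCreation

variable {V : Type*} {α : ℝ} {S : V → Finset V}

lemma netGraph_mono {S' : V → Finset V} (h : ∀ x, S x ⊆ S' x) : netGraph S ≤ netGraph S' :=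
  fun _ _ hab => ⟨hab.1, hab.2.imp (fun hb => h _ hb) (fun ha => h _ ha)⟩

lemma netCost_eq_ofReal [Fintype V] (hα : 0 ≤ α) (hconn : (netGraph S).Connected) (v : V) :
    netCost α S v = ENNReal.ofReal (α * #(S v) + ∑ w, ((netGraph S).dist v w : ℝ)) := by
  rw [netCost, ENNReal.ofReal_add (by positivity) (by positivity), ENNReal.ofReal_mul hα,
    ENNReal.ofReal_natCast, ENNReal.ofReal_sum_of_nonneg (fun _ _ => by positivity)]
  congr 1
  refine sum_congr rfl fun w _ => ?_
  rw [← (hconn v w).coe_dist_eq_edist]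
  simp

variable [DecidableEq V]

def buyEdge (S : V → Finset V) (v u : V) : V → Finset V :=
  Function.update S v (insert u (S v))

@[simp]
lemma buyEdge_self (S : V → Finset V) (v u : V) : buyEdge S v u v = insert u (S v) :=
  Function.update_self ..

lemma netGraph_le_buyEdge (v u : V) : netGraph S ≤ netGraph (buyEdge S v u) := by
  refine netGraph_mono fun x => ?_
  rcases eq_or_ne x v with rfl | hx
  · simp
  · simp [buyEdge, hx]

lemma dist_buyEdge_le (hconn : (netGraph S).Connected) {v u : V} (hvu : v ≠ u) (w : V) :
    (netGraph (buyEdge S v u)).dist v w ≤ 1 + (netGraph S).dist u w := by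
  have hle := netGraph_le_buyEdge (S := S) v u
  have hadj : (netGraph (buyEdge S v u)).Adj v u := ⟨hvu, by simp⟩
  calc _ ≤ (netGraph (buyEdge S v u)).dist v u + (netGraph (buyEdge S v u)).dist u w :=
        (hconn.mono hle).dist_triangle
    _ ≤ 1 + (netGraph S).dist u w := by
        rw [SimpleGraph.dist_eq_one_iff_adj.mpr hadj]
        exact Nat.add_le_add_left ((hconn u w).dist_anti hle) 1

variable [Fintype V]

theorem IsNash.sum_dist_le_add_sum_dist_buyEdge (hα : 0 ≤ α) (hNash : IsNash α S)
    (hconn : (netGraph S).Connected) {v u : V} (hv : v ∉ S v) (hvu : v ≠ u) :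
    ∑ w, ((netGraph S).dist v w : ℝ) ≤
      α + ∑ w, ((netGraph (buyEdge S v u)).dist v w : ℝ) := by
  have hconn' := hconn.mono (netGraph_le_buyEdge (S := S) v u)
  have hdev : netCost α S v ≤ netCost α (buyEdge S v u) v :=
    hNash v (insert u (S v)) (by simp [hvu, hv])
  rw [netCost_eq_ofReal hα hconn, netCost_eq_ofReal hα hconn', buyEdge_self,
    ENNReal.ofReal_le_ofReal_iff (by positivity)] at hdev
  have hcard : (#(insert u (S v)) : ℝ) ≤ #(S v) + 1 := by exact_mod_cast card_insert_le u (S v)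
  linarith [mul_le_mul_of_nonneg_left hcard hα]

theorem IsNash.card_le_of_buyEdge (hα : 0 ≤ α) (hNash : IsNash α S)
    (hconn : (netGraph S).Connected) {v u : V} (hv : v ∉ S v) (hvu : v ≠ u) :
    (#{w | (netGraph S).dist u w + 2 ≤ (netGraph S).dist v w} : ℝ) ≤ α := by
  set G := netGraph S
  set G' := netGraph (buyEdge S v u)
  have hgain :
      ∀ w, (if G.dist u w + 2 ≤ G.dist v w then 1 else 0) + G'.dist v w ≤ G.dist v w := by
    intro w
    have h₁ : G'.dist v w ≤ 1 + G.dist u w := dist_buyEdge_le hconn hvu w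
    have h₂ : G'.dist v w ≤ G.dist v w := (hconn v w).dist_anti (netGraph_le_buyEdge v u)
    split_ifs <;> omega
  calc (#{w | G.dist u w + 2 ≤ G.dist v w} : ℝ)
      = ∑ w, ((if G.dist u w + 2 ≤ G.dist v w then 1 else 0 : ℕ) : ℝ) := by
        simp [sum_boole]
    _ ≤ ∑ w, (G.dist v w : ℝ) - ∑ w, (G'.dist v w : ℝ) := by
        rw [le_sub_iff_add_le, ← sum_add_distrib]
        exact sum_le_sum fun w _ => by exact_mod_cast hgain w
    _ ≤ α := by linarith [hNash.sum_dist_le_add_sum_dist_buyEdge hα hconn hv hvu (u := u)]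

theorem IsNash.card_two_le_dist_le (hα : 0 ≤ α) (hNash : IsNash α S)
    (hconn : (netGraph S).Connected) {v : V} (hv : v ∉ S v) :
    (#{w | 2 ≤ (netGraph S).dist v w} : ℝ) ≤ α * #{w | (netGraph S).dist v w = 2} := by
  set G := netGraph S
  have hcover : ({w | 2 ≤ G.dist v w} : Finset V) ⊆
      ({w | G.dist v w = 2} : Finset V).biUnion fun u => {w | G.dist u w + 2 ≤ G.dist v w} := by
    intro w hw
    obtain ⟨u, hu, huw⟩ := (hconn v w).exists_dist_eq_add (mem_filter.mp hw).2
    refine mem_biUnion.mpr ⟨u, by simpa using hu, ?_⟩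
    simp only [mem_filter, mem_univ, true_and]
    omega
  calc (#{w | 2 ≤ G.dist v w} : ℝ)
      ≤ ∑ u ∈ {w | G.dist v w = 2}, (#{w | G.dist u w + 2 ≤ G.dist v w} : ℝ) := by
        exact_mod_cast (card_le_card hcover).trans card_biUnion_le
    _ ≤ ∑ u ∈ {w | G.dist v w = 2}, α := by
        refine sum_le_sum fun u hu => hNash.card_le_of_buyEdge hα hconn hv ?_
        rintro rfl
        simp at hu
    _ = α * #{w | G.dist v w = 2} := by rw [sum_const, nsmul_eq_mul, mul_comm]

end NetworkCreation

/-- In a connected Nash equilibrium on `n` vertices with `α > 1`, for every vertex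
`v` we have `|N₁| + α|N₂| + 1 ≥ n`, where `Nᵢ` is the set of vertices at distance
exactly `i` from `v`. -/
theorem stmt1 {V : Type*} [Fintype V] [DecidableEq V] (α : ℝ) (hα : 1 < α)
    (S : V → Finset V) (hS : ∀ v, v ∉ S v) (hNash : IsNash α S)
    (hconn : (netGraph S).Connected) (v : V) :
    (Fintype.card V : ℝ) ≤
      ({w : V | (netGraph S).edist v w = 1}.ncard : ℝ)
      + α * ({w : V | (netGraph S).edist v w = 2}.ncard : ℝ) + 1 := by
  have hN₁ : {w | (netGraph S).edist v w = 1}.ncard = #{w | (netGraph S).dist v w = 1} := by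
    exact_mod_cast hconn.ncard_edist_eq v 1
  have hN₂ : {w | (netGraph S).edist v w = 2}.ncard = #{w | (netGraph S).dist v w = 2} := by
    exact_mod_cast hconn.ncard_edist_eq v 2
  have hcard : (Fintype.card V : ℝ) ≤
      #{w | (netGraph S).dist v w = 1} + #{w | 2 ≤ (netGraph S).dist v w} + 1 := by
    exact_mod_cast hconn.card_le_card_dist_eq_one_add_card_two_le_dist v
  rw [hN₁, hN₂]
  linarith [hNash.card_two_le_dist_le (by linarith) hconn (hS v)]
end

section
/- For α ≥ 1, the star with all edges bought by the center is a Nash equilibrium of the network creation game on n ≥ 2 vertices: the center cannot profitably delete or change its edges (deletion disconnects the graph), and no leaf can profitably buy edges since each bought edge costs α ≥ 1 and decreases its distance sum by at most 1. -/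
open scoped ENNReal

/-!
If the center drops or redirects any edge, some leaf becomes isolated and the center's cost is
infinite. A leaf `v` of the star is at distance `1` from the center and `2` from everything else.
In any graph the distance sum from `v` is at least `2 (|V| - 1) - deg v`, and after `v` buys a
set `T` its degree is at most `|T| + 1`; so buying `T` saves at most `|T| ≤ α |T|`.
-/

namespace SimpleGraph

variable {V : Type*} (G : SimpleGraph V)

theorem two_le_edist_of_not_adj {u v : V} (hne : u ≠ v) (hadj : ¬G.Adj u v) :
    2 ≤ G.edist u v := by
  have hone : G.edist u v ≠ 1 := fun h => hadj (edist_eq_one_iff_adj.mp h)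
  exact Order.add_one_le_of_lt
    (lt_of_le_of_ne (Order.one_le_iff_pos.mpr (edist_pos_of_ne hne)) hone.symm)

theorem two_mul_card_le_degree_add_sum_edist [Fintype V] [DecidableEq V] [DecidableRel G.Adj]
    (v : V) : 2 * Fintype.card V ≤ 2 + G.degree v + ∑ w, G.edist v w := by
  have hpoint : ∀ w, (2 : ℕ∞) ≤
      ((if w = v then 2 else 0) + if G.Adj v w then 1 else 0) + G.edist v w := by
    intro w
    by_cases hwv : w = v
    · simp [hwv]
    by_cases hadj : G.Adj v w
    · simpa [hwv, hadj, one_add_one_eq_two] using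
        add_le_add_right (Order.one_le_iff_pos.mpr (edist_pos_of_ne (G := G) (Ne.symm hwv))) 1
    · simpa [hwv, hadj] using G.two_le_edist_of_not_adj (Ne.symm hwv) hadj
  calc (2 * Fintype.card V : ℕ∞) = ∑ _w : V, 2 := by simp [mul_comm]
    _ ≤ ∑ w, (((if w = v then 2 else 0) + if G.Adj v w then 1 else 0) + G.edist v w) :=
      Finset.sum_le_sum fun w _ => hpoint w
    _ = 2 + G.degree v + ∑ w, G.edist v w := by
      rw [Finset.sum_add_distrib, Finset.sum_add_distrib, Finset.sum_ite_eq',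
        Finset.sum_boole, ← neighborFinset_eq_filter, card_neighborFinset_eq_degree]
      simp

theorem sum_edist_add_three_le_of_forall_adj [Fintype V] {v c : V} (hvc : v ≠ c)
    (hc : ∀ w, w ≠ c → G.Adj w c) : ∑ w, G.edist v w + 3 ≤ 2 * Fintype.card V := by
  classical
  have hpoint : ∀ w, G.edist v w + ((if w = v then 2 else 0) + if w = c then 1 else 0) ≤ 2 := by
    intro w
    by_cases hwv : w = v
    · subst hwv; simp [hvc]
    by_cases hwc : w = c
    · subst hwc
      simp [hwv, edist_eq_one_iff_adj.mpr (hc v hvc), one_add_one_eq_two]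
    · simp only [hwv, hwc, if_false, add_zero]
      simpa using edist_le ((Walk.nil.cons (hc w hwc).symm).cons (hc v hvc))
  calc ∑ w, G.edist v w + 3
      = ∑ w, (G.edist v w + ((if w = v then 2 else 0) + if w = c then 1 else 0)) := by
        rw [Finset.sum_add_distrib, Finset.sum_add_distrib, Finset.sum_ite_eq',
          Finset.sum_ite_eq']
        simp only [Finset.mem_univ, if_true]
        norm_num
    _ ≤ ∑ _w : V, 2 := Finset.sum_le_sum fun w _ => hpoint w
    _ = 2 * Fintype.card V := by simp [mul_comm]

end SimpleGraph

section NetworkCreation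

variable {V : Type*}

theorem degree_netGraph_le [Fintype V] [DecidableEq V] (S : V → Finset V) (v : V) :
    (netGraph S).degree v ≤ (S v).card + ({u | v ∈ S u} : Finset V).card := by
  rw [← SimpleGraph.card_neighborFinset_eq_degree]
  refine (Finset.card_le_card fun w hw => ?_).trans (Finset.card_union_le _ _)
  obtain ⟨-, hw | hw⟩ := (SimpleGraph.mem_neighborFinset _ _ _).mp hw <;> simp [hw]

theorem netCost_eq_top_of_not_reachable [Fintype V] {S : V → Finset V} {v w : V}
    (h : ¬(netGraph S).Reachable v w) (α : ℝ) : netCost α S v = ⊤ := by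
  rw [netCost, ENNReal.add_eq_top, ENNReal.sum_eq_top]
  exact Or.inr ⟨w, Finset.mem_univ w, by simp [SimpleGraph.edist_eq_top_of_not_reachable h]⟩

theorem not_reachable_netGraph_of_isolated {S : V → Finset V} {v w : V} (hvw : v ≠ w)
    (hSw : S w = ∅) (hw : ∀ u, w ∉ S u) : ¬(netGraph S).Reachable v w := by
  rintro ⟨p⟩
  cases p.reverse with
  | nil => exact hvw rfl
  | cons hadj _ => obtain ⟨-, h | h⟩ := hadj <;> simp_all

variable [Fintype V] [DecidableEq V]

def starProfile (c : V) : V → Finset V :=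
  fun v => if v = c then Finset.univ \ {c} else ∅

@[simp] theorem starProfile_self (c : V) : starProfile c c = Finset.univ \ {c} := if_pos rfl

@[simp] theorem starProfile_of_ne {c v : V} (h : v ≠ c) : starProfile c v = ∅ := if_neg h

theorem netCost_starProfile_center_le (α : ℝ) (c : V) {T : Finset V} (hcT : c ∉ T) :
    netCost α (starProfile c) c ≤ netCost α (Function.update (starProfile c) c T) c := by
  by_cases hT : T = Finset.univ \ {c}
  · rw [hT, ← starProfile_self, Function.update_eq_self]
  obtain ⟨w, hwc, hwT⟩ : ∃ w, w ≠ c ∧ w ∉ T := by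
    by_contra! h
    exact hT (Finset.ext fun w => by by_cases hw : w = c <;> simp_all)
  refine le_top.trans_eq (netCost_eq_top_of_not_reachable (w := w) ?_ α).symm
  refine not_reachable_netGraph_of_isolated (Ne.symm hwc) (by simp [hwc]) fun u => ?_
  by_cases hu : u = c
  · simpa [hu] using hwT
  · simp [hu]

theorem degree_netGraph_update_starProfile_le {c v : V} {T : Finset V} (hvT : v ∉ T) :
    (netGraph (Function.update (starProfile c) v T)).degree v ≤ T.card + 1 := by
  set S' := Function.update (starProfile c) v T
  have hbuyer : ∀ u, v ∈ S' u → u = c := by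
    intro u hu
    by_cases huv : u = v
    · simp [S', huv, hvT] at hu
    · by_contra huc
      simp [S', huv, huc] at hu
  have hbuyers : ({u | v ∈ S' u} : Finset V).card ≤ 1 :=
    Finset.card_le_one.mpr fun a ha b hb => by
      rw [hbuyer a (by simpa using ha), hbuyer b (by simpa using hb)]
  simpa [S'] using (degree_netGraph_le S' v).trans (add_le_add_right hbuyers _)

theorem sum_edist_starProfile_le_card_add {c v : V} (hvc : v ≠ c) {T : Finset V} (hvT : v ∉ T) :
    ∑ w, (netGraph (starProfile c)).edist v w ≤
      T.card + ∑ w, (netGraph (Function.update (starProfile c) v T)).edist v w := by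
  set G' := netGraph (Function.update (starProfile c) v T)
  refine (ENat.add_le_add_iff_right (by decide : (3 : ℕ∞) ≠ ⊤)).mp ?_
  calc ∑ w, (netGraph (starProfile c)).edist v w + 3 ≤ 2 * Fintype.card V :=
        SimpleGraph.sum_edist_add_three_le_of_forall_adj _ hvc fun w hw => ⟨hw, by simp [hw]⟩
    _ ≤ 2 + G'.degree v + ∑ w, G'.edist v w := G'.two_mul_card_le_degree_add_sum_edist v
    _ ≤ 2 + (T.card + 1 : ℕ) + ∑ w, G'.edist v w := by
      gcongr
      exact degree_netGraph_update_starProfile_le hvT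
    _ = T.card + ∑ w, G'.edist v w + 3 := by push_cast; ring

theorem netCost_starProfile_leaf_le {α : ℝ} (hα : 1 ≤ α) {c v : V} (hvc : v ≠ c)
    {T : Finset V} (hvT : v ∉ T) :
    netCost α (starProfile c) v ≤ netCost α (Function.update (starProfile c) v T) v := by
  have hsum (G : SimpleGraph V) : ((∑ w, G.edist v w : ℕ∞) : ℝ≥0∞) = ∑ w, (G.edist v w : ℝ≥0∞) :=
    map_sum ENat.toENNRealRingHom _ _
  have hdist := ENat.toENNReal_le.mpr (sum_edist_starProfile_le_card_add hvc hvT)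
  rw [ENat.toENNReal_add, ENat.toENNReal_coe, hsum, hsum] at hdist
  have hαT : (T.card : ℝ≥0∞) ≤ ENNReal.ofReal α * T.card :=
    le_mul_of_one_le_left' (ENNReal.one_le_ofReal.mpr hα)
  simp only [netCost, starProfile_of_ne hvc, Function.update_self, Finset.card_empty,
    Nat.cast_zero, mul_zero, zero_add]
  exact hdist.trans (add_le_add_left hαT _)

end NetworkCreation

theorem stmt17_general {n : ℕ} (α : ℝ) (hα : 1 ≤ α) (c : Fin n) :
    IsNash α (fun v => if v = c then Finset.univ \ {c} else (∅ : Finset (Fin n))) := by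
  intro v T hvT
  obtain rfl | hvc := eq_or_ne v c
  · exact netCost_starProfile_center_le α v hvT
  · exact netCost_starProfile_leaf_le hα hvc hvT

/-- For `α ≥ 1` and `n ≥ 2`, the star in which the center buys all the edges is a
Nash equilibrium. -/
theorem stmt17 {n : ℕ} (hn : 2 ≤ n) (α : ℝ) (hα : 1 ≤ α) (c : Fin n) :
    IsNash α (fun v => if v = c then Finset.univ \ {c} else (∅ : Finset (Fin n))) :=
  stmt17_general α hα c
end
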